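/- arXiv:2011.06360 — 2 statements merged into one kernel-verified Lean document; each statement's English description precedes it below -/
import Mathlib

section
/- There exists 0 < c₀ < 1/2 such that for every ε ∈ (0, c₀) there exists an open neighborhood H_ε ⊆ H of the identity matrix such that for all h ∈ H_ε and all T > 10, one has E⁻_{T,ε} ⊆ h·E_T ⊆ E⁺_{T,ε}, where h·E_T = {h(x,y) : (x,y) ∈ E_T} is the image of E_T under the linear map h. -/
open MeasureTheory Set Filter

/-- The set `E_T` from the paper, as a subset of `ℝ^m × ℝ^n`. -/
def ESet (m n : ℕ) (ψ : ℝ → ℝ) (ν₁ : (Fin m → ℝ) → ℝ) (ν₂ : (Fin n → ℝ) → ℝ)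
    (T : ℝ) : Set ((Fin m → ℝ) × (Fin n → ℝ)) :=
  {p | ν₁ p.1 ^ m < ψ (ν₂ p.2 ^ n) ∧ 1 ≤ ν₂ p.2 ^ n ∧ ν₂ p.2 ^ n < T}

/-- The set `E⁻_{T,ε}` from the paper. -/
def Eminus (m n : ℕ) (ψ : ℝ → ℝ) (ν₁ : (Fin m → ℝ) → ℝ) (ν₂ : (Fin n → ℝ) → ℝ)
    (ε T : ℝ) : Set ((Fin m → ℝ) × (Fin n → ℝ)) :=
  {p | ν₁ p.1 ^ m < (1 + ε)⁻¹ * ψ ((1 + ε) * ν₂ p.2 ^ n)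
    ∧ 3/2 ≤ ν₂ p.2 ^ n ∧ ν₂ p.2 ^ n < (1 + ε)⁻¹ * T}

/-- The set `E'_{T,ε}` from the paper. -/
def Eprime (m n : ℕ) (ψ : ℝ → ℝ) (ν₁ : (Fin m → ℝ) → ℝ) (ν₂ : (Fin n → ℝ) → ℝ)
    (ε T : ℝ) : Set ((Fin m → ℝ) × (Fin n → ℝ)) :=
  {p | ν₁ p.1 ^ m < (1 + ε) * ψ ((1 + ε)⁻¹ * ν₂ p.2 ^ n)
    ∧ 3/2 ≤ ν₂ p.2 ^ n ∧ ν₂ p.2 ^ n < (1 + ε) * T}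

/-- The set `C₀` from the paper. -/
def Czero (m n : ℕ) (ψ : ℝ → ℝ) (ν₁ : (Fin m → ℝ) → ℝ) (ν₂ : (Fin n → ℝ) → ℝ) :
    Set ((Fin m → ℝ) × (Fin n → ℝ)) :=
  {p | ν₁ p.1 ^ m < 2 * ψ 1 ∧ 1/2 < ν₂ p.2 ^ n ∧ ν₂ p.2 ^ n ≤ 3/2}

/-- The set `E⁺_{T,ε} = E'_{T,ε} ∪ C₀` from the paper. -/
def Eplus (m n : ℕ) (ψ : ℝ → ℝ) (ν₁ : (Fin m → ℝ) → ℝ) (ν₂ : (Fin n → ℝ) → ℝ)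
    (ε T : ℝ) : Set ((Fin m → ℝ) × (Fin n → ℝ)) :=
  Eprime m n ψ ν₁ ν₂ ε T ∪ Czero m n ψ ν₁ ν₂

/-- The group `H` of block lower-triangular matrices in `SL_d(ℝ)`, viewed as a set of
matrices indexed by `Fin m ⊕ Fin n`. -/
def HSet (m n : ℕ) : Set (Matrix (Fin m ⊕ Fin n) (Fin m ⊕ Fin n) ℝ) :=
  {h | h.det = 1 ∧ ∀ (i : Fin m) (j : Fin n), h (Sum.inl i) (Sum.inr j) = 0}

/-- The image of a subset of `ℝ^m × ℝ^n` under the linear map given by a matrix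
indexed by `Fin m ⊕ Fin n`. -/
def matImage (m n : ℕ) (h : Matrix (Fin m ⊕ Fin n) (Fin m ⊕ Fin n) ℝ)
    (E : Set ((Fin m → ℝ) × (Fin n → ℝ))) : Set ((Fin m → ℝ) × (Fin n → ℝ)) :=
  (fun p => ((h.mulVec (Sum.elim p.1 p.2)) ∘ Sum.inl,
             (h.mulVec (Sum.elim p.1 p.2)) ∘ Sum.inr)) '' E

/-!
The inclusions only involve the quantities `ν₁(x)^m` and `ν₂(y)^n`, so it suffices that `h` and
`h⁻¹ = adj h` change each of them by a factor at most `1 + ε` at every point of `E_T` and of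
`E⁻_{T,ε}`. Since `h` is block lower triangular, the `x`-part of `h(x, y)` depends on `x` alone,
while the `y`-part is perturbed by an amount proportional to `‖x‖ + ‖y‖`. On these sets
`ν₁(x) ≤ max 1 (ψ 1) · ν₂(y)`, so for `h` near the identity both perturbations are small relative
to `ν₁(x)` and `ν₂(y)` respectively, by the equivalence of norms in finite dimension. Monotonicity
of `ψ` then moves points of `E_T` into `E⁺_{T,ε}` and points of `E⁻_{T,ε}` into `E_T`; the points
of `h·E_T` with `ν₂(y)^n < 3/2` are caught by `C₀`.
-/

open Topology Matrix

section NormComparison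

variable {E : Type*} [NormedAddCommGroup E] [NormedSpace ℝ E] [FiniteDimensional ℝ E]

theorem Seminorm.continuous_of_finiteDimensional (p : Seminorm ℝ E) : Continuous p :=
  p.convexOn.locallyLipschitz.continuous

theorem Seminorm.exists_norm_le_mul (p : Seminorm ℝ E) (hp : ∀ x, p x = 0 → x = 0) :
    ∃ c, 0 < c ∧ ∀ x, ‖x‖ ≤ c * p x := by
  rcases subsingleton_or_nontrivial E with hE | hE
  · exact ⟨1, one_pos, fun x => by simp [Subsingleton.elim x 0]⟩
  obtain ⟨z, hz, hmin⟩ := (isCompact_sphere (0 : E) 1).exists_isMinOn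
    (NormedSpace.sphere_nonempty.2 zero_le_one) p.continuous_of_finiteDimensional.continuousOn
  have hz0 : 0 < p z := (apply_nonneg p z).lt_of_ne' fun h => by simp [hp z h] at hz
  refine ⟨(p z)⁻¹, inv_pos.2 hz0, fun x => ?_⟩
  rcases eq_or_ne x 0 with rfl | hx
  · simp
  have hxz : p z ≤ p (‖x‖⁻¹ • x) := hmin (by simp [norm_smul, hx])
  rw [map_smul_eq_mul, norm_inv, norm_norm] at hxz
  rw [le_inv_mul_iff₀ hz0]
  rwa [le_inv_mul_iff₀ (norm_pos_iff.2 hx), mul_comm] at hxz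

theorem Seminorm.eventually_le_mul_norm_and_norm_le_mul (p : Seminorm ℝ E)
    (hp : ∀ x, p x = 0 → x = 0) : ∀ᶠ K in atTop, ∀ x, p x ≤ K * ‖x‖ ∧ ‖x‖ ≤ K * p x := by
  obtain ⟨C, -, hpC⟩ := p.bound_of_continuous_normedSpace p.continuous_of_finiteDimensional
  obtain ⟨c, -, hpc⟩ := p.exists_norm_le_mul hp
  filter_upwards [eventually_ge_atTop C, eventually_ge_atTop c] with K hCK hcK x
  exact ⟨(hpC x).trans (by gcongr), (hpc x).trans (by gcongr)⟩

end NormComparison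

theorem Matrix.eventually_norm_mulVec_sub_le {ι : Type*} [Fintype ι] [DecidableEq ι] {δ : ℝ}
    (hδ : 0 < δ) : ∀ᶠ g in 𝓝 (1 : Matrix ι ι ℝ), ∀ v, ‖g *ᵥ v - v‖ ≤ δ * ‖v‖ := by
  let L : Matrix ι ι ℝ →ₗ[ℝ] (ι → ℝ) →L[ℝ] (ι → ℝ) :=
    LinearMap.toContinuousLinearMap.toLinearMap ∘ₗ Matrix.toLin'.toLinearMap
  filter_upwards [Metric.tendsto_nhds.1 (L.continuous_of_finiteDimensional.tendsto 1) δ hδ]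
    with g hg v
  calc ‖g *ᵥ v - v‖ = ‖(L g - L 1) v‖ := by simp [L]
    _ ≤ ‖L g - L 1‖ * ‖v‖ := (L g - L 1).le_opNorm v
    _ ≤ δ * ‖v‖ := by rw [← dist_eq_norm]; gcongr

theorem Matrix.blockTriangular_isLeft_iff {ι₁ ι₂ R : Type*} [Zero R]
    {M : Matrix (ι₁ ⊕ ι₂) (ι₁ ⊕ ι₂) R} :
    M.BlockTriangular Sum.isLeft ↔ ∀ i j, M (Sum.inl i) (Sum.inr j) = 0 := by
  refine ⟨fun h i j => h (by simp), ?_⟩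
  rintro h (i | i) (j | j) hij <;> first | exact h i j | exact absurd hij (by simp)

theorem Matrix.BlockTriangular.adjugate_of_isUnit_det {ι α R : Type*} [Fintype ι]
    [DecidableEq ι] [CommRing R] [LinearOrder α] {M : Matrix ι ι R} {b : ι → α}
    (hM : M.BlockTriangular b) (hdet : IsUnit M.det) : M.adjugate.BlockTriangular b := by
  have := M.invertibleOfIsUnitDet hdet
  intro i j hij
  have h := blockTriangular_inv_of_blockTriangular hM hij
  rw [nonsing_inv_apply _ hdet, smul_apply, smul_eq_mul] at h
  exact hdet.unit⁻¹.isUnit.mul_right_eq_zero.1 h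

section BlockAction

variable {ι₁ ι₂ : Type*} [Fintype ι₁] [Fintype ι₂]

/-- `matImage m n h E` is the image of `E` under `blockMulVec h`. -/
def blockMulVec (g : Matrix (ι₁ ⊕ ι₂) (ι₁ ⊕ ι₂) ℝ) (p : (ι₁ → ℝ) × (ι₂ → ℝ)) :
    (ι₁ → ℝ) × (ι₂ → ℝ) :=
  Equiv.sumArrowEquivProdArrow ι₁ ι₂ ℝ (g *ᵥ Sum.elim p.1 p.2)

theorem blockMulVec_mul (g g' : Matrix (ι₁ ⊕ ι₂) (ι₁ ⊕ ι₂) ℝ) (p : (ι₁ → ℝ) × (ι₂ → ℝ)) :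
    blockMulVec (g * g') p = blockMulVec g (blockMulVec g' p) := by
  simp [blockMulVec, mulVec_mulVec, Equiv.sumArrowEquivProdArrow]

theorem blockMulVec_one [DecidableEq ι₁] [DecidableEq ι₂] (p : (ι₁ → ℝ) × (ι₂ → ℝ)) :
    blockMulVec 1 p = p := by
  simp [blockMulVec, Equiv.sumArrowEquivProdArrow]

theorem blockMulVec_fst_of_blockTriangular {g : Matrix (ι₁ ⊕ ι₂) (ι₁ ⊕ ι₂) ℝ}
    (hg : g.BlockTriangular Sum.isLeft) (x : ι₁ → ℝ) (y : ι₂ → ℝ) :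
    (blockMulVec g (x, y)).1 = (blockMulVec g (x, 0)).1 := by
  ext i
  simp [blockMulVec, mulVec, dotProduct, Fintype.sum_sum_type,
    hg (i := Sum.inl i) (j := Sum.inr _) (by simp)]

theorem norm_sum_elim_le (x : ι₁ → ℝ) (y : ι₂ → ℝ) : ‖Sum.elim x y‖ ≤ ‖x‖ + ‖y‖ := by
  rw [pi_norm_le_iff_of_nonneg (by positivity)]
  rintro (i | j)
  · simpa using (norm_le_pi_norm x i).trans (le_add_of_nonneg_right (norm_nonneg y))
  · simpa using (norm_le_pi_norm y j).trans (le_add_of_nonneg_left (norm_nonneg x))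

theorem norm_blockMulVec_fst_sub_le (g : Matrix (ι₁ ⊕ ι₂) (ι₁ ⊕ ι₂) ℝ)
    (p : (ι₁ → ℝ) × (ι₂ → ℝ)) :
    ‖(blockMulVec g p).1 - p.1‖ ≤ ‖g *ᵥ Sum.elim p.1 p.2 - Sum.elim p.1 p.2‖ :=
  (pi_norm_le_iff_of_nonneg (norm_nonneg _)).2 fun i => by
    simpa [blockMulVec] using norm_le_pi_norm (g *ᵥ Sum.elim p.1 p.2 - Sum.elim p.1 p.2) (.inl i)

theorem norm_blockMulVec_snd_sub_le (g : Matrix (ι₁ ⊕ ι₂) (ι₁ ⊕ ι₂) ℝ)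
    (p : (ι₁ → ℝ) × (ι₂ → ℝ)) :
    ‖(blockMulVec g p).2 - p.2‖ ≤ ‖g *ᵥ Sum.elim p.1 p.2 - Sum.elim p.1 p.2‖ :=
  (pi_norm_le_iff_of_nonneg (norm_nonneg _)).2 fun i => by
    simpa [blockMulVec] using norm_le_pi_norm (g *ᵥ Sum.elim p.1 p.2 - Sum.elim p.1 p.2) (.inr i)

end BlockAction

theorem exists_pos_pow_mem_Icc_of_abs_sub_le (k : ℕ) {ε : ℝ} (hε : 0 < ε) :
    ∃ θ > 0, ∀ b b' : ℝ, 0 ≤ b → |b' - b| ≤ θ * b →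
      (1 + ε)⁻¹ * b ^ k ≤ b' ^ k ∧ b' ^ k ≤ (1 + ε) * b ^ k := by
  have hnhds : Ioo (1 + ε)⁻¹ (1 + ε) ∈ 𝓝 ((1 : ℝ) ^ k) := by
    rw [one_pow]
    exact Ioo_mem_nhds (inv_lt_one_of_one_lt₀ (by linarith)) (by linarith)
  obtain ⟨r, hr, hpow⟩ := Metric.eventually_nhds_iff.1 ((continuous_pow k).continuousAt hnhds)
  refine ⟨r / 2, half_pos hr, fun b b' hb hbb' => ?_⟩
  rcases hb.eq_or_lt with rfl | hb
  · obtain rfl : b' = 0 := by simpa using hbb'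
    exact ⟨mul_le_of_le_one_left (by positivity) (inv_le_one_of_one_le₀ (by linarith)),
      le_mul_of_one_le_left (by positivity) (by linarith)⟩
  have ht : dist (b' / b) 1 < r := by
    rw [Real.dist_eq, div_sub_one hb.ne', abs_div, abs_of_pos hb, div_lt_iff₀ hb]
    linarith [mul_pos hr hb]
  obtain ⟨hlo, hhi⟩ : (1 + ε)⁻¹ < (b' / b) ^ k ∧ (b' / b) ^ k < 1 + ε := hpow ht
  rw [div_pow, lt_div_iff₀ (by positivity)] at hlo
  rw [div_pow, div_lt_iff₀ (by positivity)] at hhi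
  exact ⟨hlo.le, hhi.le⟩

def IsPowDistortion {E F : Type*} (ν₁ : E → ℝ) (ν₂ : F → ℝ) (k₁ k₂ : ℕ) (ε : ℝ)
    (p q : E × F) : Prop :=
  ν₁ q.1 ^ k₁ ≤ (1 + ε) * ν₁ p.1 ^ k₁ ∧
    (1 + ε)⁻¹ * ν₂ p.2 ^ k₂ ≤ ν₂ q.2 ^ k₂ ∧ ν₂ q.2 ^ k₂ ≤ (1 + ε) * ν₂ p.2 ^ k₂

section Perturbation

variable {ι₁ ι₂ : Type*} [Fintype ι₁] [Fintype ι₂] [DecidableEq ι₁] [DecidableEq ι₂]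
  (p₁ : Seminorm ℝ (ι₁ → ℝ)) (p₂ : Seminorm ℝ (ι₂ → ℝ))

theorem eventually_abs_sub_le_of_blockTriangular (hp₁ : ∀ x, p₁ x = 0 → x = 0)
    (hp₂ : ∀ y, p₂ y = 0 → y = 0) {θ : ℝ} (hθ : 0 < θ) {A : ℝ} (hA : 0 ≤ A) :
    ∀ᶠ g in 𝓝 (1 : Matrix (ι₁ ⊕ ι₂) (ι₁ ⊕ ι₂) ℝ), g.BlockTriangular Sum.isLeft →
      ∀ p : (ι₁ → ℝ) × (ι₂ → ℝ), p₁ p.1 ≤ A * p₂ p.2 →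
        |p₁ (blockMulVec g p).1 - p₁ p.1| ≤ θ * p₁ p.1 ∧
          |p₂ (blockMulVec g p).2 - p₂ p.2| ≤ θ * p₂ p.2 := by
  obtain ⟨K, hK₁, hK₂, hK⟩ := ((p₁.eventually_le_mul_norm_and_norm_le_mul hp₁).and
    ((p₂.eventually_le_mul_norm_and_norm_le_mul hp₂).and (eventually_gt_atTop 0))).exists
  set δ := θ / (K ^ 2 * (A + 1)) with hδ
  have hKδK : K * δ * K = θ / (A + 1) := by rw [hδ]; field_simp
  filter_upwards [eventually_norm_mulVec_sub_le (ι := ι₁ ⊕ ι₂) (δ := δ) (by positivity)]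
    with g hg htri p hxy
  obtain ⟨x, y⟩ := p
  constructor
  · calc |p₁ (blockMulVec g (x, y)).1 - p₁ x|
        ≤ p₁ ((blockMulVec g (x, 0)).1 - x) := by
          rw [blockMulVec_fst_of_blockTriangular htri]; exact abs_sub_map_le_sub p₁ _ _
      _ ≤ K * (δ * ‖Sum.elim x (0 : ι₂ → ℝ)‖) :=
          (hK₁ _).1.trans (by gcongr; exact (norm_blockMulVec_fst_sub_le g _).trans (hg _))
      _ ≤ K * (δ * (K * p₁ x)) := by
          gcongr; simpa using (norm_sum_elim_le x (0 : ι₂ → ℝ)).trans (by simpa using (hK₁ x).2)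
      _ = θ / (A + 1) * p₁ x := by rw [← hKδK]; ring
      _ ≤ θ * p₁ x := by gcongr; exact div_le_self hθ.le (by linarith)
  · have hy' : ‖(blockMulVec g (x, y)).2 - y‖ ≤ δ * (‖x‖ + ‖y‖) :=
      (norm_blockMulVec_snd_sub_le g _).trans ((hg _).trans (by gcongr; exact norm_sum_elim_le x y))
    calc |p₂ (blockMulVec g (x, y)).2 - p₂ y|
        ≤ p₂ ((blockMulVec g (x, y)).2 - y) := abs_sub_map_le_sub p₂ _ _
      _ ≤ K * (δ * (‖x‖ + ‖y‖)) := (hK₂ _).1.trans (by gcongr)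
      _ ≤ K * (δ * (K * p₁ x + K * p₂ y)) := by gcongr <;> simp only [hK₁, hK₂]
      _ ≤ K * (δ * (K * (A * p₂ y) + K * p₂ y)) := by gcongr
      _ = θ * p₂ y := by rw [show θ = θ / (A + 1) * (A + 1) by field_simp, ← hKδK]; ring

theorem eventually_isPowDistortion_blockMulVec (hp₁ : ∀ x, p₁ x = 0 → x = 0)
    (hp₂ : ∀ y, p₂ y = 0 → y = 0) (k₁ k₂ : ℕ) {ε : ℝ} (hε : 0 < ε) {A : ℝ} (hA : 0 ≤ A) :
    ∀ᶠ g in 𝓝 (1 : Matrix (ι₁ ⊕ ι₂) (ι₁ ⊕ ι₂) ℝ), g.BlockTriangular Sum.isLeft →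
      ∀ p : (ι₁ → ℝ) × (ι₂ → ℝ), p₁ p.1 ≤ A * p₂ p.2 →
        IsPowDistortion p₁ p₂ k₁ k₂ ε p (blockMulVec g p) := by
  obtain ⟨θ₁, hθ₁, hpow₁⟩ := exists_pos_pow_mem_Icc_of_abs_sub_le k₁ hε
  obtain ⟨θ₂, hθ₂, hpow₂⟩ := exists_pos_pow_mem_Icc_of_abs_sub_le k₂ hε
  filter_upwards [eventually_abs_sub_le_of_blockTriangular p₁ p₂ hp₁ hp₂ hθ₁ hA,
    eventually_abs_sub_le_of_blockTriangular p₁ p₂ hp₁ hp₂ hθ₂ hA] with g hg₁ hg₂ htri p hp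
  exact ⟨(hpow₁ _ _ (apply_nonneg _ _) (hg₁ htri p hp).1).2,
    hpow₂ _ _ (apply_nonneg _ _) (hg₂ htri p hp).2⟩

end Perturbation

section EpsilonSets

variable {m n : ℕ} {ψ : ℝ → ℝ} {ν₁ : (Fin m → ℝ) → ℝ} {ν₂ : (Fin n → ℝ) → ℝ} {ε T : ℝ}

theorem two_thirds_le_inv_one_add {ε : ℝ} (hε0 : 0 ≤ ε) (hε : ε ≤ 1 / 2) :
    2 / 3 ≤ (1 + ε)⁻¹ := by
  rw [le_inv_comm₀ (by norm_num) (by linarith)]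
  linarith

theorem image_ESet_subset_Eplus (hψ1 : 0 < ψ 1) (hψ : AntitoneOn ψ (Ici 1)) (hε0 : 0 ≤ ε)
    (hε : ε ≤ 1 / 2) {f : (Fin m → ℝ) × (Fin n → ℝ) → (Fin m → ℝ) × (Fin n → ℝ)}
    (hf : ∀ p ∈ ESet m n ψ ν₁ ν₂ T, IsPowDistortion ν₁ ν₂ m n ε p (f p)) :
    f '' ESet m n ψ ν₁ ν₂ T ⊆ Eplus m n ψ ν₁ ν₂ ε T := by
  rintro _ ⟨p, hp, rfl⟩
  obtain ⟨hx', hy'lo, hy'hi⟩ := hf p hp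
  obtain ⟨hx, hy1, hyT⟩ := hp
  have hinv := two_thirds_le_inv_one_add hε0 hε
  have hx'ψ : ν₁ (f p).1 ^ m < (1 + ε) * ψ (ν₂ p.2 ^ n) := hx'.trans_lt (by gcongr)
  rcases le_or_gt (3 / 2) (ν₂ (f p).2 ^ n) with hy' | hy'
  · refine Or.inl ⟨hx'ψ.trans_le ?_, hy', hy'hi.trans_lt (by gcongr)⟩
    have hy'le : (1 + ε)⁻¹ * ν₂ (f p).2 ^ n ≤ ν₂ p.2 ^ n := by
      rwa [inv_mul_le_iff₀ (by linarith)]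
    gcongr
    exact hψ (mem_Ici.2 (by nlinarith)) (mem_Ici.2 hy1) hy'le
  · refine Or.inr ⟨?_, by nlinarith, hy'.le⟩
    calc ν₁ (f p).1 ^ m < (1 + ε) * ψ (ν₂ p.2 ^ n) := hx'ψ
      _ ≤ (1 + ε) * ψ 1 := by gcongr; exact hψ (mem_Ici.2 le_rfl) (mem_Ici.2 hy1) hy1
      _ < 2 * ψ 1 := by gcongr; linarith

theorem Eminus_subset_image (hψ : AntitoneOn ψ (Ici 1)) (hε0 : 0 ≤ ε) (hε : ε ≤ 1 / 2)
    {f g : (Fin m → ℝ) × (Fin n → ℝ) → (Fin m → ℝ) × (Fin n → ℝ)} (hfg : ∀ p, f (g p) = p)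
    (hg : ∀ p ∈ Eminus m n ψ ν₁ ν₂ ε T, IsPowDistortion ν₁ ν₂ m n ε p (g p)) :
    Eminus m n ψ ν₁ ν₂ ε T ⊆ f '' ESet m n ψ ν₁ ν₂ T := by
  intro p hp
  refine ⟨g p, ?_, hfg p⟩
  obtain ⟨hx', hy'lo, hy'hi⟩ := hg p hp
  obtain ⟨hx, hy32, hyT⟩ := hp
  have hinv := two_thirds_le_inv_one_add hε0 hε
  have hy'1 : 1 ≤ ν₂ (g p).2 ^ n := by nlinarith
  refine ⟨hx'.trans_lt ?_, hy'1, hy'hi.trans_lt ?_⟩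
  · calc (1 + ε) * ν₁ p.1 ^ m < (1 + ε) * ((1 + ε)⁻¹ * ψ ((1 + ε) * ν₂ p.2 ^ n)) := by gcongr
      _ = ψ ((1 + ε) * ν₂ p.2 ^ n) := by field_simp
      _ ≤ ψ (ν₂ (g p).2 ^ n) := hψ (mem_Ici.2 hy'1) (mem_Ici.2 (hy'1.trans hy'hi)) hy'hi
  · rwa [lt_inv_mul_iff₀ (by linarith)] at hyT

theorem ESet_subset_setOf (hψ : AntitoneOn ψ (Ici 1)) :
    ESet m n ψ ν₁ ν₂ T ⊆ {p | ν₁ p.1 ^ m ≤ ψ 1 ∧ 1 ≤ ν₂ p.2 ^ n} :=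
  fun _ ⟨hx, hy1, _⟩ => ⟨hx.le.trans (hψ (mem_Ici.2 le_rfl) (mem_Ici.2 hy1) hy1), hy1⟩

theorem Eminus_subset_setOf (hψpos : ∀ t : ℝ, 1 ≤ t → 0 < ψ t) (hψ : AntitoneOn ψ (Ici 1))
    (hε0 : 0 ≤ ε) : Eminus m n ψ ν₁ ν₂ ε T ⊆ {p | ν₁ p.1 ^ m ≤ ψ 1 ∧ 1 ≤ ν₂ p.2 ^ n} := by
  rintro p ⟨hx, hy32, -⟩
  have hy1 : 1 ≤ (1 + ε) * ν₂ p.2 ^ n := by nlinarith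
  refine ⟨hx.le.trans ?_, by linarith⟩
  calc (1 + ε)⁻¹ * ψ ((1 + ε) * ν₂ p.2 ^ n) ≤ ψ ((1 + ε) * ν₂ p.2 ^ n) :=
        mul_le_of_le_one_left (hψpos _ hy1).le (inv_le_one_of_one_le₀ (by linarith))
    _ ≤ ψ 1 := hψ (mem_Ici.2 le_rfl) (mem_Ici.2 hy1) hy1

end EpsilonSets

theorem le_max_one_mul_of_pow_le {a b B : ℝ} {m n : ℕ} (hm : m ≠ 0) (hn : n ≠ 0)
    (hb : 0 ≤ b) (hab : a ^ m ≤ B) (hb1 : 1 ≤ b ^ n) : a ≤ max 1 B * b := by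
  have haB : a ≤ max 1 B := by
    rcases le_or_gt a 1 with h | h
    · exact h.trans (le_max_left _ _)
    · exact (le_self_pow₀ h.le hm).trans (hab.trans (le_max_right _ _))
  exact haB.trans (le_mul_of_one_le_right (by positivity)
    ((one_le_pow_iff_of_nonneg hb hn).1 hb1))

theorem ET_stable_under_perturbation_general (m n : ℕ) (hm : 1 ≤ m) (hn : 1 ≤ n)
    (ψ : ℝ → ℝ)
    (hψpos : ∀ t : ℝ, 1 ≤ t → 0 < ψ t)
    (hψanti : AntitoneOn ψ (Set.Ici 1))
    (ν₁ : (Fin m → ℝ) → ℝ)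
    (hν₁add : ∀ x y, ν₁ (x + y) ≤ ν₁ x + ν₁ y)
    (hν₁smul : ∀ (c : ℝ) x, ν₁ (c • x) = |c| * ν₁ x)
    (hν₁def : ∀ x, ν₁ x = 0 ↔ x = 0)
    (ν₂ : (Fin n → ℝ) → ℝ)
    (hν₂add : ∀ x y, ν₂ (x + y) ≤ ν₂ x + ν₂ y)
    (hν₂smul : ∀ (c : ℝ) x, ν₂ (c • x) = |c| * ν₂ x)
    (hν₂def : ∀ x, ν₂ x = 0 ↔ x = 0) :
    ∃ c₀ : ℝ, 0 < c₀ ∧ c₀ < 1/2 ∧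
      ∀ ε : ℝ, 0 < ε → ε < c₀ →
        ∃ U : Set (Matrix (Fin m ⊕ Fin n) (Fin m ⊕ Fin n) ℝ),
          IsOpen U ∧ (1 : Matrix (Fin m ⊕ Fin n) (Fin m ⊕ Fin n) ℝ) ∈ U ∧
          ∀ h ∈ U ∩ HSet m n, ∀ T : ℝ, 10 < T →
            Eminus m n ψ ν₁ ν₂ ε T ⊆ matImage m n h (ESet m n ψ ν₁ ν₂ T)
            ∧ matImage m n h (ESet m n ψ ν₁ ν₂ T) ⊆ Eplus m n ψ ν₁ ν₂ ε T := by
  let p₁ : Seminorm ℝ (Fin m → ℝ) := Seminorm.of ν₁ hν₁add hν₁smul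
  let p₂ : Seminorm ℝ (Fin n → ℝ) := Seminorm.of ν₂ hν₂add hν₂smul
  have hcone (p : (Fin m → ℝ) × (Fin n → ℝ)) (hp : ν₁ p.1 ^ m ≤ ψ 1 ∧ 1 ≤ ν₂ p.2 ^ n) :
      p₁ p.1 ≤ max 1 (ψ 1) * p₂ p.2 :=
    le_max_one_mul_of_pow_le (by omega) (by omega) (apply_nonneg p₂ _) hp.1 hp.2
  refine ⟨1 / 4, by norm_num, by norm_num, fun ε hε hε4 => ?_⟩
  have hnear := eventually_isPowDistortion_blockMulVec p₁ p₂ (fun x => (hν₁def x).1)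
    (fun y => (hν₂def y).1) m n hε (zero_le_one.trans (le_max_left 1 (ψ 1)))
  obtain ⟨U, hU, hUopen, h1U⟩ := eventually_nhds_iff.1 <| hnear.and <|
    (continuous_id.matrix_adjugate.tendsto' 1 1 adjugate_one).eventually hnear
  refine ⟨U, hUopen, h1U, fun h ⟨hhU, hdet, h12⟩ T _ => ?_⟩
  have htri : h.BlockTriangular Sum.isLeft := blockTriangular_isLeft_iff.2 h12
  have htri' := htri.adjugate_of_isUnit_det (hdet ▸ isUnit_one)
  obtain ⟨hh, hadj⟩ := hU h hhU
  have hinv (p : (Fin m → ℝ) × (Fin n → ℝ)) : blockMulVec h (blockMulVec h.adjugate p) = p := by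
    rw [← blockMulVec_mul, mul_adjugate, hdet, one_smul, blockMulVec_one]
  exact ⟨Eminus_subset_image hψanti hε.le (by linarith) hinv fun p hp =>
      hadj htri' p (hcone p (Eminus_subset_setOf hψpos hψanti hε.le hp)),
    image_ESet_subset_Eplus (hψpos 1 le_rfl) hψanti hε.le (by linarith) fun p hp =>
      hh htri p (hcone p (ESet_subset_setOf hψanti hp))⟩

theorem ET_stable_under_perturbation (m n : ℕ) (hm : 1 ≤ m) (hn : 1 ≤ n)
    (ψ : ℝ → ℝ)
    (hψpos : ∀ t : ℝ, 1 ≤ t → 0 < ψ t)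
    (hψcont : ContinuousOn ψ (Set.Ici 1))
    (hψanti : AntitoneOn ψ (Set.Ici 1))
    (ν₁ : (Fin m → ℝ) → ℝ)
    (hν₁add : ∀ x y, ν₁ (x + y) ≤ ν₁ x + ν₁ y)
    (hν₁smul : ∀ (c : ℝ) x, ν₁ (c • x) = |c| * ν₁ x)
    (hν₁def : ∀ x, ν₁ x = 0 ↔ x = 0)
    (ν₂ : (Fin n → ℝ) → ℝ)
    (hν₂add : ∀ x y, ν₂ (x + y) ≤ ν₂ x + ν₂ y)
    (hν₂smul : ∀ (c : ℝ) x, ν₂ (c • x) = |c| * ν₂ x)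
    (hν₂def : ∀ x, ν₂ x = 0 ↔ x = 0) :
    ∃ c₀ : ℝ, 0 < c₀ ∧ c₀ < 1/2 ∧
      ∀ ε : ℝ, 0 < ε → ε < c₀ →
        ∃ U : Set (Matrix (Fin m ⊕ Fin n) (Fin m ⊕ Fin n) ℝ),
          IsOpen U ∧ (1 : Matrix (Fin m ⊕ Fin n) (Fin m ⊕ Fin n) ℝ) ∈ U ∧
          ∀ h ∈ U ∩ HSet m n, ∀ T : ℝ, 10 < T →
            Eminus m n ψ ν₁ ν₂ ε T ⊆ matImage m n h (ESet m n ψ ν₁ ν₂ T)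
            ∧ matImage m n h (ESet m n ψ ν₁ ν₂ T) ⊆ Eplus m n ψ ν₁ ν₂ ε T :=
  ET_stable_under_perturbation_general m n hm hn ψ hψpos hψanti ν₁ hν₁add hν₁smul hν₁def ν₂ hν₂add
    hν₂smul hν₂def
end

section
/- For every T > 1, the Lebesgue volume of E_T equals c_{ν₁} · c_{ν₂} · ∫₁^T ψ(r) dr. -/
/-!
`ν₁` and `ν₂` are seminorms on finite-dimensional spaces, hence convex and so continuous; a norm
is then bounded below by a multiple of the ambient norm (compactness of the unit sphere), so its
unit ball has finite volume. By homogeneity `{ν ^ d < r}` is the unit ball dilated by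
`r ^ (1 / d)`, of volume `r · c_ν`; thus `y ↦ ν₂ y ^ n` pushes Lebesgue measure forward to `c_{ν₂}`
times Lebesgue measure on `[0, ∞)`. The slice of `E_T` over `y` has volume `c_{ν₁} ψ (ν₂ y ^ n)`,
and Fubini turns the integral of the slices into `c_{ν₁} c_{ν₂} ∫₁^T ψ`.
-/

open MeasureTheory Set Module
open scoped ENNReal Pointwise

namespace MeasureTheory.Measure

variable {α β : Type*} [MeasurableSpace α] [MeasurableSpace β] {μ : Measure α} {ν : Measure β}
  [SFinite μ] [SFinite ν]

theorem prod_setOf_lt_comp_and_mem {f : α → ℝ} {g : β → ℝ} {Φ : ℝ → ℝ} {A : Set ℝ}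
    (hf : Measurable f) (hg : Measurable g) (hΦ : Measurable Φ) (hA : MeasurableSet A) :
    μ.prod ν {z | f z.1 < Φ (g z.2) ∧ g z.2 ∈ A} = ∫⁻ r in A, μ {x | f x < Φ r} ∂ν.map g := by
  have hlt : MeasurableSet {z : α × ℝ | f z.1 < Φ z.2} :=
    measurableSet_lt (hf.comp measurable_fst) (hΦ.comp measurable_snd)
  have hS : MeasurableSet {z : α × β | f z.1 < Φ (g z.2) ∧ g z.2 ∈ A} :=
    (measurableSet_lt (hf.comp measurable_fst) (hΦ.comp (hg.comp measurable_snd))).inter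
      (hA.preimage (hg.comp measurable_snd))
  have hslice : ∀ y, μ ((fun x => (x, y)) ⁻¹' {z | f z.1 < Φ (g z.2) ∧ g z.2 ∈ A}) =
      A.indicator (fun r => μ {x | f x < Φ r}) (g y) := fun y => by
    by_cases hy : g y ∈ A <;> simp [hy]
  have hfibre : Measurable fun r => μ {x | f x < Φ r} := measurable_measure_prodMk_right hlt
  rw [prod_apply_symm hS, lintegral_congr hslice, ← lintegral_map (hfibre.indicator hA) hg,
    lintegral_indicator hA]

end MeasureTheory.Measure

theorem intervalIntegral_eq_toReal_setLIntegral_Ico {ψ : ℝ → ℝ} {a b : ℝ} (hab : a ≤ b)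
    (hψ : ContinuousOn ψ (Ico a b)) (hψ₀ : ∀ r ∈ Ico a b, 0 ≤ ψ r) :
    ∫ r in a..b, ψ r = (∫⁻ r in Ico a b, ENNReal.ofReal (ψ r)).toReal := by
  rw [intervalIntegral.integral_of_le hab, integral_Ioc_eq_integral_Ioo,
    ← integral_Ico_eq_integral_Ioo, integral_eq_lintegral_of_nonneg_ae
      (ae_restrict_of_forall_mem measurableSet_Ico hψ₀)
      (hψ.aestronglyMeasurable measurableSet_Ico)]

namespace Seminorm

variable {E : Type*} [NormedAddCommGroup E] [NormedSpace ℝ E] [FiniteDimensional ℝ E]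
  (p : Seminorm ℝ E)

protected theorem continuous_of_finiteDimensional_s5 : Continuous p :=
  p.convexOn.locallyLipschitz.continuous

theorem exists_pos_mul_norm_le (hp : ∀ x, p x = 0 → x = 0) : ∃ ε > 0, ∀ x, ε * ‖x‖ ≤ p x := by
  obtain ⟨ε, hε, hmin⟩ := (isCompact_sphere (0 : E) 1).exists_forall_le'
    p.continuous_of_finiteDimensional_s5.continuousOn (a := 0) fun x hx =>
      (apply_nonneg p x).lt_of_ne' fun h => by simp [hp x h] at hx
  refine ⟨ε, hε, fun x => ?_⟩
  rcases eq_or_ne x 0 with rfl | hx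
  · simp
  · have hx' : 0 < ‖x‖ := norm_pos_iff.2 hx
    have := hmin (‖x‖⁻¹ • x) (by simp [norm_smul, hx'.ne'])
    rwa [map_smul_eq_mul, norm_inv, norm_norm, le_inv_mul_iff₀ hx', mul_comm] at this

theorem isBounded_setOf_lt (hp : ∀ x, p x = 0 → x = 0) (r : ℝ) :
    Bornology.IsBounded {x | p x < r} := by
  obtain ⟨ε, hε, hle⟩ := p.exists_pos_mul_norm_le hp
  refine (Metric.isBounded_closedBall (x := (0 : E)) (r := r / ε)).subset fun x hx => ?_
  rw [mem_closedBall_zero_iff, le_div_iff₀' hε]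
  exact (hle x).trans hx.le

variable [MeasurableSpace E] (μ : Measure E)

theorem measure_setOf_lt_ne_top [IsFiniteMeasureOnCompacts μ] (hp : ∀ x, p x = 0 → x = 0)
    (r : ℝ) : μ {x | p x < r} ≠ ∞ :=
  (p.isBounded_setOf_lt hp r).measure_lt_top.ne

theorem addHaar_setOf_pow_finrank_lt [BorelSpace E] [μ.IsAddHaarMeasure] (hE : 0 < finrank ℝ E)
    (r : ℝ) :
    μ {x | p x ^ finrank ℝ E < r} = ENNReal.ofReal r * μ {x | p x < 1} := by
  set d := finrank ℝ E
  rcases le_or_gt r 0 with hr | hr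
  · have hempty : {x | p x ^ d < r} = ∅ :=
      eq_empty_of_forall_notMem fun x hx => (hr.trans (by positivity)).not_gt hx
    rw [hempty, ENNReal.ofReal_of_nonpos hr, measure_empty, zero_mul]
  · set t : ℝ := r ^ (d : ℝ)⁻¹
    have ht : 0 < t := Real.rpow_pos_of_pos hr _
    have htd : t ^ d = r := Real.rpow_inv_natCast_pow hr.le hE.ne'
    have hdil : {x | p x ^ d < r} = t • {x | p x < 1} := by
      ext x
      rw [mem_smul_set_iff_inv_smul_mem₀ ht.ne', mem_ofPred_eq, mem_ofPred_eq, map_smul_eq_mul,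
        norm_inv, Real.norm_of_nonneg ht.le, inv_mul_lt_one₀ ht, ← htd,
        pow_lt_pow_iff_left₀ (apply_nonneg p x) ht.le hE.ne']
    rw [hdil, Measure.addHaar_smul, htd, abs_of_pos hr]

theorem map_pow_finrank_addHaar [BorelSpace E] [μ.IsAddHaarMeasure] (hp : ∀ x, p x = 0 → x = 0)
    (hE : 0 < finrank ℝ E) :
    μ.map (fun x => p x ^ finrank ℝ E) = μ {x | p x < 1} • volume.restrict (Ici 0) := by
  set ρ := μ.map (fun x => p x ^ finrank ℝ E)
  set c := μ {x | p x < 1}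
  have hmeas : Measurable fun x => p x ^ finrank ℝ E :=
    (p.continuous_of_finiteDimensional_s5.pow _).measurable
  have hρ : ∀ r, ρ (Iio r) = c * ENNReal.ofReal r := fun r => by
    rw [Measure.map_apply hmeas measurableSet_Iio, mul_comm]
    exact p.addHaar_setOf_pow_finrank_lt μ hE r
  have hleb : ∀ r, (c • volume.restrict (Ici 0)) (Iio r) = c * ENNReal.ofReal r := fun r => by
    rw [Measure.smul_apply, Measure.restrict_apply measurableSet_Iio, Iio_inter_Ici,
      Real.volume_Ico, sub_zero, smul_eq_mul]
  have hfin : ∀ r, c * ENNReal.ofReal r ≠ ∞ := fun r =>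
    ENNReal.mul_ne_top (p.measure_setOf_lt_ne_top μ hp 1) ENNReal.ofReal_ne_top
  have hIco : ∀ a b : ℝ, Ico a b = Iio b \ Iio a := fun a b => by
    ext; simp
  refine Measure.ext_of_Ico' _ _ (fun a b _ => ne_top_of_le_ne_top (hρ b ▸ hfin b)
    (measure_mono Ico_subset_Iio_self)) fun a b hab => ?_
  have hsub : Iio a ⊆ Iio b := Iio_subset_Iio hab.le
  rw [hIco, measure_sdiff hsub measurableSet_Iio.nullMeasurableSet (hρ a ▸ hfin a),
    measure_sdiff hsub measurableSet_Iio.nullMeasurableSet (hleb a ▸ hfin a), hρ, hρ, hleb, hleb]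

theorem prod_setOf_pow_finrank_lt_and_mem [BorelSpace E] [μ.IsAddHaarMeasure]
    {F : Type*} [NormedAddCommGroup F] [NormedSpace ℝ F] [FiniteDimensional ℝ F]
    [MeasurableSpace F] [BorelSpace F] (q : Seminorm ℝ F) (ν : Measure F) [ν.IsAddHaarMeasure]
    (hq : ∀ y, q y = 0 → y = 0)
    (hE : 0 < finrank ℝ E) (hF : 0 < finrank ℝ F) {Φ : ℝ → ℝ} (hΦ : Measurable Φ)
    {A : Set ℝ} (hA : MeasurableSet A) (hA₀ : A ⊆ Ici 0) :
    μ.prod ν {z | p z.1 ^ finrank ℝ E < Φ (q z.2 ^ finrank ℝ F) ∧ q z.2 ^ finrank ℝ F ∈ A} =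
      μ {x | p x < 1} * ν {y | q y < 1} * ∫⁻ r in A, ENNReal.ofReal (Φ r) := by
  rw [Measure.prod_setOf_lt_comp_and_mem (f := fun x => p x ^ finrank ℝ E)
      (g := fun y => q y ^ finrank ℝ F) (p.continuous_of_finiteDimensional_s5.pow _).measurable
      (q.continuous_of_finiteDimensional_s5.pow _).measurable hΦ hA,
    q.map_pow_finrank_addHaar ν hq hF, setLIntegral_smul_measure,
    Measure.restrict_restrict hA, inter_eq_left.2 hA₀, smul_eq_mul]
  simp_rw [p.addHaar_setOf_pow_finrank_lt μ hE]
  rw [lintegral_mul_const _ hΦ.ennreal_ofReal]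
  ring

end Seminorm

theorem volume_ET_general (m n : ℕ) (hm : 1 ≤ m) (hn : 1 ≤ n)
    (ψ : ℝ → ℝ)
    (hψpos : ∀ t : ℝ, 1 ≤ t → 0 < ψ t)
    (hψcont : ContinuousOn ψ (Set.Ici 1))
    (ν₁ : (Fin m → ℝ) → ℝ)
    (hν₁add : ∀ x y, ν₁ (x + y) ≤ ν₁ x + ν₁ y)
    (hν₁smul : ∀ (c : ℝ) x, ν₁ (c • x) = |c| * ν₁ x)
    (ν₂ : (Fin n → ℝ) → ℝ)
    (hν₂add : ∀ x y, ν₂ (x + y) ≤ ν₂ x + ν₂ y)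
    (hν₂smul : ∀ (c : ℝ) x, ν₂ (c • x) = |c| * ν₂ x)
    (hν₂def : ∀ x, ν₂ x = 0 ↔ x = 0)
    (T : ℝ) (hT : 1 < T) :
    (volume {p : (Fin m → ℝ) × (Fin n → ℝ) |
        ν₁ p.1 ^ m < ψ (ν₂ p.2 ^ n) ∧ 1 ≤ ν₂ p.2 ^ n ∧ ν₂ p.2 ^ n < T}).toReal
      = (volume {x : Fin m → ℝ | ν₁ x < 1}).toReal
        * (volume {y : Fin n → ℝ | ν₂ y < 1}).toReal
        * ∫ r in (1:ℝ)..T, ψ r := by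
  let p₁ : Seminorm ℝ (Fin m → ℝ) := .of ν₁ hν₁add fun c x => by rw [hν₁smul, Real.norm_eq_abs]
  let p₂ : Seminorm ℝ (Fin n → ℝ) := .of ν₂ hν₂add fun c x => by rw [hν₂smul, Real.norm_eq_abs]
  -- `ψ` is only continuous on `[1, ∞)`; the product formula needs a measurable function on `ℝ`
  let Ψ : ℝ → ℝ := fun r => ψ (max 1 r)
  have hΨ : Continuous Ψ := hψcont.comp_continuous (continuous_const.max continuous_id)
    fun r => mem_Ici.2 (le_max_left _ _)
  have hΨψ : ∀ r ∈ Ico 1 T, Ψ r = ψ r := fun r hr => by simp only [Ψ, max_eq_right hr.1]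
  have hvol := p₁.prod_setOf_pow_finrank_lt_and_mem volume p₂ volume (fun y => (hν₂def y).1)
    (by simp; omega) (by simp; omega) hΨ.measurable (measurableSet_Ico (b := T))
    (Ico_subset_Ici_self.trans (Ici_subset_Ici.2 zero_le_one))
  simp only [finrank_fin_fun, ← Measure.volume_eq_prod] at hvol
  have hset : {z : (Fin m → ℝ) × (Fin n → ℝ) |
        ν₁ z.1 ^ m < ψ (ν₂ z.2 ^ n) ∧ 1 ≤ ν₂ z.2 ^ n ∧ ν₂ z.2 ^ n < T} =
      {z | p₁ z.1 ^ m < Ψ (p₂ z.2 ^ n) ∧ p₂ z.2 ^ n ∈ Ico 1 T} := by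
    ext z
    exact and_congr_left fun hz => by rw [← hΨψ _ hz]; rfl
  change _ = (volume {x | p₁ x < 1}).toReal * (volume {y | p₂ y < 1}).toReal * _
  rw [hset, hvol, ENNReal.toReal_mul, ENNReal.toReal_mul,
    setLIntegral_congr_fun measurableSet_Ico fun r hr => by rw [hΨψ r hr],
    ← intervalIntegral_eq_toReal_setLIntegral_Ico hT.le (hψcont.mono fun r hr => hr.1)
      fun r hr => (hψpos r hr.1).le]

theorem volume_ET (m n : ℕ) (hm : 1 ≤ m) (hn : 1 ≤ n)
    (ψ : ℝ → ℝ)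
    (hψpos : ∀ t : ℝ, 1 ≤ t → 0 < ψ t)
    (hψcont : ContinuousOn ψ (Set.Ici 1))
    (hψanti : AntitoneOn ψ (Set.Ici 1))
    (ν₁ : (Fin m → ℝ) → ℝ)
    (hν₁add : ∀ x y, ν₁ (x + y) ≤ ν₁ x + ν₁ y)
    (hν₁smul : ∀ (c : ℝ) x, ν₁ (c • x) = |c| * ν₁ x)
    (hν₁def : ∀ x, ν₁ x = 0 ↔ x = 0)
    (ν₂ : (Fin n → ℝ) → ℝ)
    (hν₂add : ∀ x y, ν₂ (x + y) ≤ ν₂ x + ν₂ y)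
    (hν₂smul : ∀ (c : ℝ) x, ν₂ (c • x) = |c| * ν₂ x)
    (hν₂def : ∀ x, ν₂ x = 0 ↔ x = 0)
    (T : ℝ) (hT : 1 < T) :
    (volume {p : (Fin m → ℝ) × (Fin n → ℝ) |
        ν₁ p.1 ^ m < ψ (ν₂ p.2 ^ n) ∧ 1 ≤ ν₂ p.2 ^ n ∧ ν₂ p.2 ^ n < T}).toReal
      = (volume {x : Fin m → ℝ | ν₁ x < 1}).toReal
        * (volume {y : Fin n → ℝ | ν₂ y < 1}).toReal
        * ∫ r in (1:ℝ)..T, ψ r :=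
  volume_ET_general m n hm hn ψ hψpos hψcont ν₁ hν₁add hν₁smul ν₂ hν₂add hν₂smul hν₂def T hT
end
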